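/- Let $G$ be a group satisfying condition (C) and let $h \in G$ have infinite order. Then for every integer $k \ge 1$ the normalizers of cyclic subgroups are nested, $N_G(\langle h^{k!} \rangle) \subseteq N_G(\langle h^{(k+1)!} \rangle)$, and the commensurator of $\langle h \rangle$ is the union of this chain: $N_G[\langle h \rangle] = \bigcup_{k \ge 1} N_G(\langle h^{k!} \rangle)$. -/

import Mathlib

/-!
Under (C), if `x` conjugates `h ^ m` into `⟨h⟩` at all, it sends `h ^ m` to `h ^ (± m)`, hence
sends every power `h ^ n` with `m ∣ n` to `h ^ (± n)` and so normalizes `⟨h ^ n⟩`. An element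
of the commensurator conjugates some nontrivial `h ^ m` into `⟨h⟩`, and `m ∣ |m|!`. Conversely,
an element `x` normalizing `⟨h ^ k!⟩ ≤ ⟨h⟩` maps it onto itself, so this infinite subgroup lies in
both `x ⟨h⟩ x⁻¹` and `⟨h⟩`.
-/

def ConditionC (G : Type*) [Group G] : Prop :=
  ∀ g h : G, ¬ IsOfFinOrder h → ∀ k l : ℤ, g * h ^ k * g⁻¹ = h ^ l → |k| = |l|

open Subgroup

section

variable {G : Type*} [Group G]

lemma mem_normalizer_zpowers_of_conj_eq_or_eq_inv {a x : G}
    (hx : x * a * x⁻¹ = a ∨ x * a * x⁻¹ = a⁻¹) : x ∈ normalizer (zpowers a : Set G) := by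
  rw [mem_normalizer_iff_map_conj_eq, MonoidHom.map_zpowers]
  rcases hx with hx | hx <;> simp [MulAut.conj_apply, hx, zpowers_inv]

lemma ConditionC.mem_normalizer_zpowers_pow (hC : ConditionC G) {h x : G} (hh : ¬ IsOfFinOrder h)
    {m l : ℤ} {n : ℕ} (hconj : x * h ^ m * x⁻¹ = h ^ l) (hdvd : m ∣ n) :
    x ∈ normalizer (zpowers (h ^ n) : Set G) := by
  obtain ⟨c, hc⟩ := hdvd
  apply mem_normalizer_zpowers_of_conj_eq_or_eq_inv
  rw [← zpow_natCast, hc, zpow_mul, ← conj_zpow, hconj]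
  rcases abs_eq_abs.mp (hC x h hh m l hconj) with rfl | rfl
  · exact .inl rfl
  · exact .inr (by rw [← zpow_mul, ← zpow_mul, ← zpow_neg, neg_mul, neg_neg])

lemma ConditionC.normalizer_zpowers_pow_le_of_dvd (hC : ConditionC G) {h : G}
    (hh : ¬ IsOfFinOrder h) {a b : ℕ} (hab : a ∣ b) :
    normalizer (zpowers (h ^ a) : Set G) ≤ normalizer (zpowers (h ^ b) : Set G) := by
  intro x hx
  obtain ⟨c, hc⟩ := (mem_normalizer_iff.mp hx (h ^ a)).mp (mem_zpowers _)
  refine hC.mem_normalizer_zpowers_pow hh (l := a * c) ?_ (Int.natCast_dvd_natCast.mpr hab)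
  rw [zpow_natCast, ← hc, zpow_mul, zpow_natCast]

lemma exists_conj_zpow_eq_zpow_of_infinite {h x : G}
    (hinf : ((fun y => x * y * x⁻¹) '' (zpowers h : Set G) ∩ zpowers h).Infinite) :
    ∃ m l : ℤ, m ≠ 0 ∧ x * h ^ m * x⁻¹ = h ^ l := by
  obtain ⟨-, ⟨⟨-, ⟨m, rfl⟩, rfl⟩, ⟨l, hl⟩⟩, hne⟩ := (hinf.sdiff (Set.finite_singleton 1)).nonempty
  refine ⟨m, l, ?_, hl.symm⟩
  rintro rfl
  simp at hne

lemma infinite_conj_image_inter_of_mem_normalizer {H K : Subgroup G} {x : G} (hKH : K ≤ H)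
    (hx : x ∈ normalizer (K : Set G)) (hK : (K : Set G).Infinite) :
    ((fun y => x * y * x⁻¹) '' (H : Set G) ∩ H).Infinite := by
  have hKx : (fun y => x * y * x⁻¹) '' (K : Set G) = K := mem_normalizer_iff_conj_image_eq.mp hx
  refine hK.mono (Set.subset_inter ?_ hKH)
  exact hKx.symm.subset.trans (Set.image_mono hKH)

end

/-- Let `G` satisfy condition (C) and let `h ∈ G` have infinite order. Then the
normalizers of the cyclic subgroups `⟨h ^ k!⟩` are nested, and the commensurator of
`⟨h⟩` is their union over `k ≥ 1`. -/
theorem commensurator_eq_iUnion_normalizer {G : Type*} [Group G]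
    (hC : ∀ g h : G, ¬ IsOfFinOrder h → ∀ k l : ℤ, g * h ^ k * g⁻¹ = h ^ l → |k| = |l|)
    (h : G) (hh : ¬ IsOfFinOrder h) :
    (∀ k : ℕ, 1 ≤ k →
      Subgroup.normalizer (Subgroup.zpowers (h ^ Nat.factorial k) : Set G) ≤
        Subgroup.normalizer (Subgroup.zpowers (h ^ Nat.factorial (k + 1)) : Set G)) ∧
    {x : G | (((fun y => x * y * x⁻¹) '' (Subgroup.zpowers h : Set G)) ∩
        (Subgroup.zpowers h : Set G)).Infinite}
      = ⋃ k ≥ 1, (Subgroup.normalizer (Subgroup.zpowers (h ^ Nat.factorial k) : Set G) : Set G) := by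
  refine ⟨fun k _ => ConditionC.normalizer_zpowers_pow_le_of_dvd hC hh
    (Nat.factorial_dvd_factorial k.le_succ), Set.ext fun x => ?_⟩
  simp only [Set.mem_ofPred_eq, Set.mem_iUnion, SetLike.mem_coe, exists_prop]
  constructor
  · intro hinf
    obtain ⟨m, l, hm, hconj⟩ := exists_conj_zpow_eq_zpow_of_infinite hinf
    have hdvd : m ∣ Nat.factorial m.natAbs := Int.natAbs_dvd.mp <|
      Int.natCast_dvd_natCast.mpr (Nat.dvd_factorial (Int.natAbs_pos.mpr hm) le_rfl)
    exact ⟨m.natAbs, Int.natAbs_pos.mpr hm, ConditionC.mem_normalizer_zpowers_pow hC hh hconj hdvd⟩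
  · rintro ⟨k, -, hx⟩
    refine infinite_conj_image_inter_of_mem_normalizer (zpowers_le.mpr (npow_mem_zpowers h _)) hx ?_
    exact infinite_zpowers.mpr fun hfin => hh (hfin.of_pow (Nat.factorial_ne_zero k))
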